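/- arXiv:2005.13891 — 3 statements merged into one kernel-verified Lean document; each statement's English description precedes it below -/
import Mathlib

section
/- Let w be a weight sequence such that there exists M ≥ 1 with ẇ_k ≤ M·w_k for all k ≥ 1 (so ẇ ≍ w), and let H₁, H₂ be separable complex Hilbert spaces. Then E_w(H₁,H₂) is complete with respect to the quasi-norm |·|_w: every sequence (A_n) in E_w(H₁,H₂) that is Cauchy with respect to |·|_w converges in |·|_w to some A ∈ E_w(H₁,H₂). -/
open Filter Topology

noncomputable section

def IsWeight (w : ℕ → ℝ) : Prop :=
  (∀ k, 1 ≤ k → w (k + 1) ≤ w k) ∧ (∀ k, 1 ≤ k → 0 ≤ w k) ∧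
    Filter.Tendsto w Filter.atTop (nhds 0)

def sNum {H₁ H₂ : Type*} [NormedAddCommGroup H₁] [NormedSpace ℂ H₁]
    [NormedAddCommGroup H₂] [NormedSpace ℂ H₂] (k : ℕ) (A : H₁ →L[ℂ] H₂) : ℝ :=
  sInf {c : ℝ | ∃ F : H₁ →L[ℂ] H₂,
    Module.rank ℂ (LinearMap.range (F : H₁ →ₗ[ℂ] H₂)) < (k : Cardinal) ∧ c = ‖A - F‖}

def MemE {H₁ H₂ : Type*} [NormedAddCommGroup H₁] [NormedSpace ℂ H₁]
    [NormedAddCommGroup H₂] [NormedSpace ℂ H₂] (w : ℕ → ℝ) (A : H₁ →L[ℂ] H₂) : Prop :=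
  IsCompactOperator A ∧ ∃ M : ℝ, 0 ≤ M ∧ ∀ k, 1 ≤ k → sNum k A ≤ M * w k

def gaugeE {H₁ H₂ : Type*} [NormedAddCommGroup H₁] [NormedSpace ℂ H₁]
    [NormedAddCommGroup H₂] [NormedSpace ℂ H₂] (w : ℕ → ℝ) (A : H₁ →L[ℂ] H₂) : ℝ :=
  sInf {M : ℝ | 0 ≤ M ∧ ∀ k, 1 ≤ k → sNum k A ≤ M * w k}

def dbl (w : ℕ → ℝ) (k : ℕ) : ℝ := w ((k + 1) / 2)

def gmean (w : ℕ → ℝ) (k : ℕ) : ℝ := (∏ n ∈ Finset.Icc 1 k, w n) ^ ((1 : ℝ) / (k : ℝ))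

def algMult {H : Type*} [NormedAddCommGroup H] [NormedSpace ℂ H] (A : H →L[ℂ] H) (z : ℂ) : ℕ :=
  Module.finrank ℂ (Module.End.maxGenEigenspace (A : H →ₗ[ℂ] H) z)

def IsEigSeq {H : Type*} [NormedAddCommGroup H] [NormedSpace ℂ H]
    (A : H →L[ℂ] H) (lam : ℕ → ℂ) : Prop :=
  (∀ k, 1 ≤ k → ‖lam (k + 1)‖ ≤ ‖lam k‖) ∧
  ∀ z : ℂ, z ≠ 0 →
    {k : ℕ | 1 ≤ k ∧ lam k = z}.Finite ∧ {k : ℕ | 1 ≤ k ∧ lam k = z}.ncard = algMult A z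

def IsSchurDecomp {H : Type*} [NormedAddCommGroup H] [InnerProductSpace ℂ H] [CompleteSpace H]
    (A D N : H →L[ℂ] H) : Prop :=
  A = D + N ∧ IsCompactOperator D ∧ IsCompactOperator N ∧ IsStarNormal D ∧
  (∀ z : ℂ, z ≠ 0 → algMult D z = algMult A z) ∧
  spectrum ℂ D = spectrum ℂ A ∧
  spectrum ℂ N = {0} ∧
  ∀ z : ℂ, z ∉ spectrum ℂ A →
    spectrum ℂ (Ring.inverse (algebraMap ℂ (H →L[ℂ] H) z - D) * N) = {0}

def Fw (C : ℝ) (w : ℕ → ℝ) (r : ℝ) : ℝ :=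
  (1 + r * w 1) *
    (1 + ∑' k : ℕ, (∏ n ∈ Finset.Icc 1 (k + 1), w n) ^ 2 * (C * r) ^ (2 * (k + 1)))

def Ftilde (C : ℝ) (w : ℕ → ℝ) (r : ℝ) : ℝ := r * Fw C w r

def specVar (s t : Set ℂ) : ℝ := ⨆ z : s, Metric.infDist (z : ℂ) t

def hausD (s t : Set ℂ) : ℝ := max (specVar s t) (specVar t s)

def pseudoSpec {H : Type*} [NormedAddCommGroup H] [NormedSpace ℂ H] [CompleteSpace H]
    (ε : ℝ) (A : H →L[ℂ] H) : Set ℂ :=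
  spectrum ℂ A ∪ {z : ℂ | z ∉ spectrum ℂ A ∧ 1 / ε < ‖resolvent A z‖}

variable {H₁ H₂ H₃ H₄ : Type*}
  [NormedAddCommGroup H₁] [InnerProductSpace ℂ H₁] [CompleteSpace H₁]
    [TopologicalSpace.SeparableSpace H₁]
  [NormedAddCommGroup H₂] [InnerProductSpace ℂ H₂] [CompleteSpace H₂]
    [TopologicalSpace.SeparableSpace H₂]
  [NormedAddCommGroup H₃] [InnerProductSpace ℂ H₃] [CompleteSpace H₃]
    [TopologicalSpace.SeparableSpace H₃]
  [NormedAddCommGroup H₄] [InnerProductSpace ℂ H₄] [CompleteSpace H₄]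
    [TopologicalSpace.SeparableSpace H₄]

/-!
The singular numbers are 1-Lipschitz in the operator norm and satisfy the Ky Fan inequality
`s_{j+k+1}(A - B) ≤ s_{j+1}(A) + s_{k+1}(B)`. With `k = j` and the doubling condition
`ẇ ≤ M w` the latter makes the set of `w`-bounded operators closed under differences, at the
cost of a factor `M`. A `|·|_w`-Cauchy sequence is Cauchy in operator norm (as `s_1 = ‖·‖`),
so it has an operator-norm limit `L`; since each `{B | s_k(B) ≤ ε w_k}` is norm-closed, the
uniform bounds `s_k(A_m - A_n) ≤ ε w_k` pass to `s_k(A_m - L) ≤ ε w_k`.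
-/

section SingularNumbers

variable {X Y : Type*} [NormedAddCommGroup X] [NormedSpace ℂ X]
  [NormedAddCommGroup Y] [NormedSpace ℂ Y]

theorem sNum_zero (A : X →L[ℂ] Y) : sNum 0 A = 0 := by
  simp [sNum]

theorem sNum_le_norm_sub {k : ℕ} (A : X →L[ℂ] Y) {F : X →L[ℂ] Y}
    (hF : Module.rank ℂ (LinearMap.range (F : X →ₗ[ℂ] Y)) < k) : sNum k A ≤ ‖A - F‖ :=
  csInf_le ⟨0, by rintro _ ⟨G, -, rfl⟩; exact norm_nonneg _⟩ ⟨F, hF, rfl⟩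

theorem le_sNum {k : ℕ} (hk : 1 ≤ k) {A : X →L[ℂ] Y} {c : ℝ}
    (h : ∀ F : X →L[ℂ] Y,
      Module.rank ℂ (LinearMap.range (F : X →ₗ[ℂ] Y)) < k → c ≤ ‖A - F‖) :
    c ≤ sNum k A := by
  refine le_csInf ⟨‖A - 0‖, 0, ?_, rfl⟩ ?_
  · simpa using (show 0 < k from hk)
  · rintro _ ⟨F, hF, rfl⟩
    exact h F hF

theorem sNum_one (A : X →L[ℂ] Y) : sNum 1 A = ‖A‖ := by
  refine le_antisymm (by simpa using sNum_le_norm_sub (k := 1) A (F := 0) (by simp)) ?_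
  refine le_sNum le_rfl fun F hF ↦ ?_
  have hrank : Module.rank ℂ (LinearMap.range (F : X →ₗ[ℂ] Y)) = 0 :=
    Cardinal.lt_one_iff.mp (by exact_mod_cast hF)
  have hF0 : F = 0 :=
    ContinuousLinearMap.coe_injective (LinearMap.range_eq_bot.mp (Submodule.rank_eq_zero.mp hrank))
  simp [hF0]

theorem sNum_antitone {k l : ℕ} (hk : 1 ≤ k) (hkl : k ≤ l) (A : X →L[ℂ] Y) :
    sNum l A ≤ sNum k A :=
  le_sNum hk fun _ hF ↦ sNum_le_norm_sub A (hF.trans_le (by exact_mod_cast hkl))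

theorem sNum_le_add_norm_sub (k : ℕ) (A B : X →L[ℂ] Y) :
    sNum k A ≤ sNum k B + ‖A - B‖ := by
  rcases Nat.eq_zero_or_pos k with rfl | hk
  · simp [sNum_zero]
  rw [← sub_le_iff_le_add]
  refine le_sNum hk fun F hF ↦ ?_
  calc sNum k A - ‖A - B‖ ≤ ‖A - F‖ - ‖A - B‖ := by
        gcongr; exact sNum_le_norm_sub A hF
    _ ≤ ‖B - F‖ := by
      rw [sub_le_iff_le_add', show A - F = (A - B) + (B - F) by abel]
      exact norm_add_le _ _

theorem lipschitzWith_sNum (k : ℕ) : LipschitzWith 1 (sNum k : (X →L[ℂ] Y) → ℝ) :=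
  LipschitzWith.of_le_add fun A B ↦ by simpa [dist_eq_norm] using sNum_le_add_norm_sub k A B

theorem rank_range_sub_lt {j k : ℕ} {F G : X →L[ℂ] Y}
    (hF : Module.rank ℂ (LinearMap.range (F : X →ₗ[ℂ] Y)) < (j + 1 : ℕ))
    (hG : Module.rank ℂ (LinearMap.range (G : X →ₗ[ℂ] Y)) < (k + 1 : ℕ)) :
    Module.rank ℂ (LinearMap.range ((F - G : X →L[ℂ] Y) : X →ₗ[ℂ] Y)) <
      (j + k + 1 : ℕ) := by
  rw [Nat.cast_add_one, Cardinal.lt_natCast_add_one_iff] at hF hG ⊢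
  rw [ContinuousLinearMap.toLinearMap_sub, sub_eq_add_neg]
  have hneg : LinearMap.range (-(G : X →ₗ[ℂ] Y)) = LinearMap.range (G : X →ₗ[ℂ] Y) :=
    LinearMap.range_neg _
  calc Module.rank ℂ (LinearMap.range ((F : X →ₗ[ℂ] Y) + -(G : X →ₗ[ℂ] Y)))
      ≤ LinearMap.rank (F : X →ₗ[ℂ] Y) + LinearMap.rank (-(G : X →ₗ[ℂ] Y)) :=
        LinearMap.rank_add_le _ _
    _ ≤ (j + k : ℕ) := by
      rw [LinearMap.rank, LinearMap.rank, hneg, Nat.cast_add]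
      exact add_le_add hF hG

theorem sNum_sub_le (j k : ℕ) (A B : X →L[ℂ] Y) :
    sNum (j + k + 1) (A - B) ≤ sNum (j + 1) A + sNum (k + 1) B := by
  rw [← sub_le_iff_le_add]
  refine le_sNum (by omega) fun F hF ↦ ?_
  rw [sub_le_iff_le_add', ← sub_le_iff_le_add]
  refine le_sNum (by omega) fun G hG ↦ ?_
  calc sNum (j + k + 1) (A - B) - ‖A - F‖ ≤ ‖(A - B) - (F - G)‖ - ‖A - F‖ := by
        gcongr; exact sNum_le_norm_sub _ (rank_range_sub_lt hF hG)
    _ ≤ ‖B - G‖ := by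
      rw [sub_le_iff_le_add', show (A - B) - (F - G) = (A - F) - (B - G) by abel]
      exact norm_sub_le _ _

end SingularNumbers

section GaugeBounds

variable {X Y : Type*} [NormedAddCommGroup X] [NormedSpace ℂ X]
  [NormedAddCommGroup Y] [NormedSpace ℂ Y] {w : ℕ → ℝ}

def IsGaugeBound (w : ℕ → ℝ) (c : ℝ) (A : X →L[ℂ] Y) : Prop :=
  0 ≤ c ∧ ∀ k, 1 ≤ k → sNum k A ≤ c * w k

theorem IsGaugeBound.mono (hw : ∀ k, 1 ≤ k → 0 ≤ w k) {c d : ℝ} {A : X →L[ℂ] Y}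
    (h : IsGaugeBound w c A) (hcd : c ≤ d) : IsGaugeBound w d A :=
  ⟨h.1.trans hcd, fun k hk ↦ (h.2 k hk).trans (by gcongr; exact hw k hk)⟩

theorem IsGaugeBound.norm_le {c : ℝ} {A : X →L[ℂ] Y} (h : IsGaugeBound w c A) :
    ‖A‖ ≤ c * w 1 :=
  sNum_one A ▸ h.2 1 le_rfl

theorem IsGaugeBound.sub {M a b : ℝ} (hM : 0 ≤ M)
    (hdbl : ∀ k, 1 ≤ k → dbl w k ≤ M * w k) {A B : X →L[ℂ] Y} (hA : IsGaugeBound w a A) (hB : IsGaugeBound w b B) :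
    IsGaugeBound w ((a + b) * M) (A - B) := by
  have hab : 0 ≤ a + b := add_nonneg hA.1 hB.1
  refine ⟨mul_nonneg hab hM, fun j hj ↦ ?_⟩
  obtain ⟨i, hi⟩ : ∃ i, (j + 1) / 2 = i + 1 := ⟨(j + 1) / 2 - 1, by omega⟩
  calc sNum j (A - B) ≤ sNum (i + i + 1) (A - B) := sNum_antitone (by omega) (by omega) _
    _ ≤ sNum (i + 1) A + sNum (i + 1) B := sNum_sub_le i i A B
    _ ≤ a * w (i + 1) + b * w (i + 1) := add_le_add (hA.2 _ (by omega)) (hB.2 _ (by omega))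
    _ = (a + b) * dbl w j := by rw [dbl, hi]; ring
    _ ≤ (a + b) * (M * w j) := mul_le_mul_of_nonneg_left (hdbl j hj) hab
    _ = (a + b) * M * w j := by ring

theorem isClosed_setOf_isGaugeBound_const (A : X →L[ℂ] Y) :
    IsClosed {c | IsGaugeBound w c A} := by
  simp only [IsGaugeBound, Set.ofPred_and, Set.ofPred_forall]
  exact (isClosed_le continuous_const continuous_id).inter <| isClosed_iInter fun k ↦
    isClosed_iInter fun _ ↦ isClosed_le continuous_const (continuous_id.mul continuous_const)

theorem isClosed_setOf_isGaugeBound (c : ℝ) :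
    IsClosed {A : X →L[ℂ] Y | IsGaugeBound w c A} := by
  simp only [IsGaugeBound, Set.ofPred_and, Set.ofPred_forall]
  exact (isClosed_const (p := 0 ≤ c)).inter <| isClosed_iInter fun k ↦ isClosed_iInter fun _ ↦
    isClosed_le (lipschitzWith_sNum k).continuous continuous_const

theorem isGaugeBound_gaugeE {A : X →L[ℂ] Y} (h : ∃ c, IsGaugeBound w c A) :
    IsGaugeBound w (gaugeE w A) A :=
  (isClosed_setOf_isGaugeBound_const A).csInf_mem h ⟨0, fun _ hc ↦ hc.1⟩

theorem gaugeE_le {c : ℝ} {A : X →L[ℂ] Y} (h : IsGaugeBound w c A) : gaugeE w A ≤ c :=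
  csInf_le ⟨0, fun _ hc ↦ hc.1⟩ h

theorem cauchySeq_of_isGaugeBound (hw : 0 ≤ w 1) {A : ℕ → X →L[ℂ] Y}
    (h : ∀ ε : ℝ, 0 < ε → ∃ N, ∀ m ≥ N, ∀ n ≥ N, IsGaugeBound w ε (A m - A n)) :
    CauchySeq A := by
  refine Metric.cauchySeq_iff.2 fun ε hε ↦ ?_
  obtain ⟨N, hN⟩ := h (ε / (w 1 + 1)) (by positivity)
  refine ⟨N, fun m hm n hn ↦ ?_⟩
  calc dist (A m) (A n) ≤ ε / (w 1 + 1) * w 1 :=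
        dist_eq_norm (A m) (A n) ▸ (hN m hm n hn).norm_le
    _ < ε := by rw [div_mul_eq_mul_div, div_lt_iff₀ (by positivity)]; nlinarith

end GaugeBounds

/-- if `ẇ ≍ w` then `E_w` is complete with respect to `|·|_w`. -/
theorem stmt_5 (w : ℕ → ℝ) (hw : IsWeight w)
    (M : ℝ) (hM : 1 ≤ M) (hdbl : ∀ k, 1 ≤ k → dbl w k ≤ M * w k)
    (A : ℕ → (H₁ →L[ℂ] H₂)) (hmem : ∀ n, MemE w (A n))
    (hcauchy : ∀ ε : ℝ, 0 < ε → ∃ N : ℕ, ∀ m, N ≤ m → ∀ n, N ≤ n →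
      gaugeE w (A m - A n) ≤ ε) :
    ∃ L : H₁ →L[ℂ] H₂, MemE w L ∧
      ∀ ε : ℝ, 0 < ε → ∃ N : ℕ, ∀ n, N ≤ n → gaugeE w (A n - L) ≤ ε := by
  have hw0 : ∀ k, 1 ≤ k → 0 ≤ w k := hw.2.1
  have hbound : ∀ ε : ℝ, 0 < ε →
      ∃ N, ∀ m ≥ N, ∀ n ≥ N, IsGaugeBound w ε (A m - A n) := by
    intro ε hε
    obtain ⟨N, hN⟩ := hcauchy ε hε
    refine ⟨N, fun m hm n hn ↦ (isGaugeBound_gaugeE ?_).mono hw0 (hN m hm n hn)⟩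
    obtain ⟨-, a, ha⟩ := hmem m
    obtain ⟨-, b, hb⟩ := hmem n
    exact ⟨_, IsGaugeBound.sub (by linarith) hdbl ha hb⟩
  obtain ⟨L, hL⟩ :=
    cauchySeq_tendsto_of_complete (cauchySeq_of_isGaugeBound (hw0 1 le_rfl) hbound)
  have hlim : ∀ ε : ℝ, 0 < ε → ∃ N, ∀ n ≥ N, IsGaugeBound w ε (A n - L) := by
    intro ε hε
    obtain ⟨N, hN⟩ := hbound ε hε
    exact ⟨N, fun n hn ↦ (isClosed_setOf_isGaugeBound ε).mem_of_tendsto (hL.const_sub (A n))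
      (eventually_atTop.2 ⟨N, hN n hn⟩)⟩
  refine ⟨L, ⟨isClosed_setOfPred_isCompactOperator.mem_of_tendsto hL
    (.of_forall fun n ↦ (hmem n).1), ?_⟩, fun ε hε ↦ ?_⟩
  · obtain ⟨N, hN⟩ := hlim 1 one_pos
    obtain ⟨-, a, ha⟩ := hmem N
    have hsub := IsGaugeBound.sub (by linarith) hdbl ha (hN N le_rfl)
    rw [sub_sub_cancel] at hsub
    exact ⟨_, hsub⟩
  · obtain ⟨N, hN⟩ := hlim ε hε
    exact ⟨N, fun n hn ↦ gaugeE_le (hN n hn)⟩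

end
end

section
/- Let H be a separable complex Hilbert space. If A is a bounded normal operator on H, then for every bounded operator B on H the spectral variation satisfies d̂(σ(B),σ(A)) ≤ ‖A−B‖. Consequently, if A and B are both bounded normal operators on H, then the Hausdorff distance of their spectra satisfies Hdist(σ(A),σ(B)) ≤ ‖A−B‖. -/
/-! If `z ∈ σ(b)` were farther than `‖a - b‖` from `σ(a)`, then for normal `a` the continuous
functional calculus gives `‖(z - a)⁻¹‖ ≤ dist(z, σ(a))⁻¹ < ‖a - b‖⁻¹`, and the Neumann series
would make `z - b = (z - a) (1 - (z - a)⁻¹ (b - a))` invertible. -/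

open Filter Topology

noncomputable section

variable {H : Type*} [NormedAddCommGroup H] [InnerProductSpace ℂ H] [CompleteSpace H]
  [TopologicalSpace.SeparableSpace H]

section ResolventPerturbation

variable {𝕜 A : Type*} [NontriviallyNormedField 𝕜] [NormedRing A] [NormedAlgebra 𝕜 A]
  [CompleteSpace A]

theorem spectrum.notMem_of_norm_resolvent_mul_lt_one {a b : A} {z : 𝕜}
    (hz : z ∉ spectrum 𝕜 a) (h : ‖resolvent a z‖ * ‖b - a‖ < 1) : z ∉ spectrum 𝕜 b := by
  obtain ⟨u, hu⟩ := spectrum.notMem_iff.mp hz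
  have hres : resolvent a z = ↑u⁻¹ := by rw [resolvent, ← hu, Ring.inverse_unit]
  have hsmall : IsUnit (1 - resolvent a z * (b - a)) :=
    isUnit_one_sub_of_norm_lt_one ((norm_mul_le _ _).trans_lt h)
  have hfactor : algebraMap 𝕜 A z - b = u * (1 - resolvent a z * (b - a)) := by
    rw [mul_sub, mul_one, hres, ← mul_assoc, u.mul_inv, one_mul, hu]
    abel
  rw [spectrum.notMem_iff, hfactor]
  exact u.isUnit.mul hsmall

end ResolventPerturbation

section CStarAlgebra

variable {A : Type*} [CStarAlgebra A]

theorem IsStarNormal.norm_resolvent_le (a : A) [IsStarNormal a] {z : ℂ}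
    (hz : z ∉ spectrum ℂ a) : ‖resolvent a z‖ ≤ (Metric.infDist z (spectrum ℂ a))⁻¹ := by
  nontriviality A
  have hdist : 0 < Metric.infDist z (spectrum ℂ a) :=
    ((spectrum.isClosed a).notMem_iff_infDist_pos (spectrum.nonempty a)).mp hz
  have hne : ∀ x ∈ spectrum ℂ a, z - x ≠ 0 := fun x hx h ↦ hz (sub_eq_zero.mp h ▸ hx)
  have hcfc : resolvent a z = cfc (fun x : ℂ ↦ (z - x)⁻¹) a := by
    rw [cfc_inv (fun x : ℂ ↦ z - x) a hne, cfc_sub .., cfc_const z a, cfc_id' ℂ a]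
    rfl
  rw [hcfc]
  refine norm_cfc_le (inv_nonneg.mpr hdist.le) fun x hx ↦ ?_
  rw [norm_inv, ← dist_eq_norm]
  exact inv_anti₀ hdist (Metric.infDist_le_dist_of_mem hx)

theorem IsStarNormal.infDist_spectrum_le_norm_sub (a : A) [IsStarNormal a] {b : A} {z : ℂ}
    (hz : z ∈ spectrum ℂ b) : Metric.infDist z (spectrum ℂ a) ≤ ‖a - b‖ := by
  by_contra! hlt
  have hdist : 0 < Metric.infDist z (spectrum ℂ a) := (norm_nonneg _).trans_lt hlt
  have hza : z ∉ spectrum ℂ a := fun h ↦ hdist.ne' (Metric.infDist_zero_of_mem h)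
  refine spectrum.notMem_of_norm_resolvent_mul_lt_one hza ?_ hz
  calc ‖resolvent a z‖ * ‖b - a‖
      ≤ (Metric.infDist z (spectrum ℂ a))⁻¹ * ‖b - a‖ := by
        gcongr
        exact IsStarNormal.norm_resolvent_le a hza
    _ < (Metric.infDist z (spectrum ℂ a))⁻¹ * Metric.infDist z (spectrum ℂ a) := by
        rw [norm_sub_rev]
        gcongr
    _ = 1 := inv_mul_cancel₀ hdist.ne'

theorem specVar_le {s t : Set ℂ} {c : ℝ} (hc : 0 ≤ c) (h : ∀ z ∈ s, Metric.infDist z t ≤ c) :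
    specVar s t ≤ c :=
  Real.iSup_le (fun z ↦ h z z.2) hc

theorem IsStarNormal.specVar_spectrum_le_norm_sub (a : A) [IsStarNormal a] (b : A) :
    specVar (spectrum ℂ b) (spectrum ℂ a) ≤ ‖a - b‖ :=
  specVar_le (norm_nonneg _) fun _ hz ↦ IsStarNormal.infDist_spectrum_le_norm_sub a hz

theorem IsStarNormal.hausD_spectrum_le_norm_sub (a b : A) [IsStarNormal a] [IsStarNormal b] :
    hausD (spectrum ℂ a) (spectrum ℂ b) ≤ ‖a - b‖ :=
  max_le (norm_sub_rev a b ▸ IsStarNormal.specVar_spectrum_le_norm_sub b a)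
    (IsStarNormal.specVar_spectrum_le_norm_sub a b)

end CStarAlgebra

/-- spectral variation and distance bounds for normal operators. -/
theorem stmt_14 (A : H →L[ℂ] H) (hA : IsStarNormal A) :
    (∀ B : H →L[ℂ] H, specVar (spectrum ℂ B) (spectrum ℂ A) ≤ ‖A - B‖) ∧
    (∀ B : H →L[ℂ] H, IsStarNormal B →
      hausD (spectrum ℂ A) (spectrum ℂ B) ≤ ‖A - B‖) :=
  ⟨fun B ↦ IsStarNormal.specVar_spectrum_le_norm_sub A B,
    fun B _ ↦ IsStarNormal.hausD_spectrum_le_norm_sub A B⟩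

end
end

section
/- Let p, b ∈ (0,∞). Define Φ_p^{L,u}(r) = Σ_{k=0}^∞ r^k/(k!)^{1/p} and Φ_{p,b}^{L,l}(r) = Σ_{k=0}^∞ exp(−b√k)·r^k/(k!)^{1/p}. Then both power series have infinite radius of convergence (so Φ_p^{L,u} and Φ_{p,b}^{L,l} extend to entire functions), and log Φ_p^{L,u}(r) ∼ (1/p)·r^p and log Φ_{p,b}^{L,l}(r) ∼ (1/p)·r^p as r → ∞. -/
open Filter Topology

noncomputable section

/-!
For weights `0 < w ≤ 1` let `Φ(r) = ∑ w k * r ^ k / (k!) ^ (1/p)` and `t = r ^ p`.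
Since `(x ^ p) ^ k / k! ≤ exp (x ^ p)`, the terms of `Φ(r)` are bounded by
`θ ^ k * exp ((r / θ) ^ p / p)` for every `0 < θ < 1`; summing with `θ = 1 - 1/r` gives
`log Φ(r) ≤ log r + (1 - 1/r)⁻ᵖ t / p`.
Conversely `Φ(r)` dominates its term of index `k = ⌈t⌉`, whose logarithm is
`log w k + (k log t - log k!) / p = t / p + o(t)` by Stirling's bounds on `log k!`, provided
`log w k = o(k)`; this holds for `w k = 1` and for `w k = exp (-b √k)`.
-/

open Real
open scoped Nat

lemma log_factorial_le {n : ℕ} (hn : n ≠ 0) :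
    log n ! ≤ n * log n - n + log n / 2 + 1 := by
  obtain ⟨m, rfl⟩ := Nat.exists_eq_succ_of_ne_zero hn
  have hmono : log (Stirling.stirlingSeq (m + 1)) ≤ log (Stirling.stirlingSeq 1) :=
    Stirling.log_stirlingSeq'_antitone (Nat.zero_le m)
  have hm : (0 : ℝ) < (m + 1 : ℕ) := by positivity
  rw [Stirling.log_stirlingSeq_formula, Stirling.stirlingSeq_one,
    log_div (exp_pos 1).ne' (by positivity), log_exp, log_sqrt (by norm_num),
    log_mul (by norm_num) hm.ne', log_div hm.ne' (exp_pos 1).ne', log_exp] at hmono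
  linarith

lemma mul_log_sub_le_log_factorial (n : ℕ) : n * log n - n ≤ log n ! := by
  rcases Nat.eq_zero_or_pos n with rfl | hn
  · simp
  have hfac : (0 : ℝ) < n ! := by positivity
  have h := pow_div_factorial_le_exp (n : ℝ) (Nat.cast_nonneg n) n
  rw [div_le_iff₀ hfac] at h
  have := log_le_log (by positivity) h
  rw [log_pow, log_mul (exp_pos _).ne' hfac.ne', log_exp] at this
  linarith

lemma pow_div_factorial_rpow_le_exp {p x : ℝ} (hp : 0 < p) (hx : 0 ≤ x) (k : ℕ) :
    x ^ k / (k ! : ℝ) ^ (1 / p) ≤ exp (x ^ p / p) :=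
  calc x ^ k / (k ! : ℝ) ^ (1 / p) = ((x ^ p) ^ k / k !) ^ (1 / p) := by
        rw [div_rpow (by positivity) (by positivity), rpow_pow_comm hx, one_div,
          rpow_rpow_inv (by positivity) hp.ne']
    _ ≤ exp (x ^ p) ^ (1 / p) :=
        rpow_le_rpow (by positivity) (pow_div_factorial_le_exp _ (by positivity) k) (by positivity)
    _ = exp (x ^ p / p) := by rw [← exp_mul, mul_one_div]

lemma tendsto_ceil_mul_log_sub_log_factorial_div :
    Tendsto (fun t : ℝ => (⌈t⌉₊ * log t - log ⌈t⌉₊ !) / t) atTop (𝓝 1) := by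
  have hceil : Tendsto (fun t : ℝ => (⌈t⌉₊ : ℝ) / t) atTop (𝓝 1) := tendsto_nat_ceil_div_atTop
  have hlow : Tendsto (fun t : ℝ => ⌈t⌉₊ / t - (3 + log 2) * t⁻¹ - log t / t) atTop (𝓝 1) := by
    simpa using (hceil.sub (tendsto_inv_atTop_zero.const_mul (3 + log 2))).sub
      isLittleO_log_id_atTop.tendsto_div_nhds_zero
  refine tendsto_of_tendsto_of_tendsto_of_le_of_le' hlow hceil ?_ ?_
  · filter_upwards [eventually_ge_atTop 1] with t ht
    have ht0 : 0 < t := by linarith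
    set k := ⌈t⌉₊
    have hk : (0 : ℝ) < k := by positivity
    have htk : t ≤ k := Nat.le_ceil t
    have hkt : (k : ℝ) < t + 1 := Nat.ceil_lt_add_one ht0.le
    have hlog_ratio : k * log k - k * log t ≤ 2 := by
      have h := log_le_sub_one_of_pos (div_pos hk ht0)
      rw [log_div hk.ne' ht0.ne'] at h
      have : k * (k / t - 1) ≤ 2 := by
        rw [mul_sub_one, mul_div_assoc', div_sub' ht0.ne', div_le_iff₀ ht0]
        nlinarith
      nlinarith
    have hlog_k : log k ≤ log 2 + log t := by
      rw [← log_mul two_ne_zero ht0.ne']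
      exact log_le_log hk (by linarith)
    have hlog_t : 0 ≤ log t := log_nonneg ht
    have hlog_two : 0 ≤ log 2 := log_nonneg one_le_two
    have := log_factorial_le (Nat.cast_pos.mp hk).ne'
    calc _ = (k - (3 + log 2) - log t) / t := by field_simp
      _ ≤ _ := div_le_div_of_nonneg_right (by linarith) ht0.le
  · filter_upwards [eventually_gt_atTop 0] with t ht
    have := mul_log_sub_le_log_factorial ⌈t⌉₊
    have := mul_le_mul_of_nonneg_left (log_le_log ht (Nat.le_ceil t)) (Nat.cast_nonneg ⌈t⌉₊)
    gcongr
    linarith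

lemma tendsto_comp_ceil_div_of_tendsto_div {f : ℕ → ℝ}
    (hf : Tendsto (fun k : ℕ => f k / k) atTop (𝓝 0)) :
    Tendsto (fun t : ℝ => f ⌈t⌉₊ / t) atTop (𝓝 0) := by
  have := (hf.comp tendsto_nat_ceil_atTop).mul tendsto_nat_ceil_div_atTop
  rw [zero_mul] at this
  refine this.congr' ?_
  filter_upwards [eventually_gt_atTop 0] with t ht
  have : (⌈t⌉₊ : ℝ) ≠ 0 := by positivity
  simp only [Function.comp_apply]
  field_simp

section WeightedSeries

variable {p r : ℝ} {w : ℕ → ℝ}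

lemma weighted_term_le_geometric (hp : 0 < p) (hw : ∀ k, w k ≤ 1) (hr : 0 ≤ r) {θ : ℝ}
    (hθ : 0 < θ) (k : ℕ) :
    w k * r ^ k / (k ! : ℝ) ^ (1 / p) ≤ θ ^ k * exp ((r / θ) ^ p / p) :=
  calc w k * r ^ k / (k ! : ℝ) ^ (1 / p) ≤ r ^ k / (k ! : ℝ) ^ (1 / p) := by
        gcongr
        exact mul_le_of_le_one_left (by positivity) (hw k)
    _ = θ ^ k * ((r / θ) ^ k / (k ! : ℝ) ^ (1 / p)) := by
        rw [div_pow, mul_div_assoc', mul_div_cancel₀ _ (by positivity)]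
    _ ≤ θ ^ k * exp ((r / θ) ^ p / p) := by
        gcongr
        exact pow_div_factorial_rpow_le_exp hp (by positivity) k

lemma summable_weighted (hp : 0 < p) (hw₀ : ∀ k, 0 ≤ w k) (hw₁ : ∀ k, w k ≤ 1) (hr : 0 ≤ r) :
    Summable fun k : ℕ => w k * r ^ k / (k ! : ℝ) ^ (1 / p) :=
  Summable.of_nonneg_of_le (fun k => by have := hw₀ k; positivity)
    (weighted_term_le_geometric hp hw₁ hr one_half_pos) (summable_geometric_two.mul_right _)

lemma summable_ofReal_weighted_mul_pow (hp : 0 < p) (hw₀ : ∀ k, 0 ≤ w k)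
    (hw₁ : ∀ k, w k ≤ 1) (z : ℂ) :
    Summable fun k : ℕ => ((w k / (k ! : ℝ) ^ (1 / p) : ℝ) : ℂ) * z ^ k := by
  refine Summable.of_norm ((summable_weighted hp hw₀ hw₁ (norm_nonneg z)).congr fun k => ?_)
  have := hw₀ k
  rw [norm_mul, norm_pow, Complex.norm_real, norm_of_nonneg (by positivity)]
  ring

lemma tsum_weighted_le (hp : 0 < p) (hw₀ : ∀ k, 0 ≤ w k) (hw₁ : ∀ k, w k ≤ 1) (hr : 0 ≤ r)
    {θ : ℝ} (hθ₀ : 0 < θ) (hθ₁ : θ < 1) :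
    ∑' k : ℕ, w k * r ^ k / (k ! : ℝ) ^ (1 / p) ≤ exp ((r / θ) ^ p / p) / (1 - θ) :=
  calc ∑' k : ℕ, w k * r ^ k / (k ! : ℝ) ^ (1 / p)
      ≤ ∑' k : ℕ, θ ^ k * exp ((r / θ) ^ p / p) :=
        (summable_weighted hp hw₀ hw₁ hr).tsum_le_tsum
          (weighted_term_le_geometric hp hw₁ hr hθ₀)
          ((summable_geometric_of_lt_one hθ₀.le hθ₁).mul_right _)
    _ = exp ((r / θ) ^ p / p) / (1 - θ) := by
        rw [tsum_mul_right, tsum_geometric_of_lt_one hθ₀.le hθ₁, inv_mul_eq_div]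

lemma weighted_term_le_tsum (hp : 0 < p) (hw₀ : ∀ k, 0 ≤ w k) (hw₁ : ∀ k, w k ≤ 1) (hr : 0 ≤ r)
    (k : ℕ) :
    w k * r ^ k / (k ! : ℝ) ^ (1 / p) ≤ ∑' j : ℕ, w j * r ^ j / (j ! : ℝ) ^ (1 / p) :=
  (summable_weighted hp hw₀ hw₁ hr).le_tsum k fun j _ => by have := hw₀ j; positivity

lemma log_weighted_term_le_log_tsum (hp : 0 < p) (hw₀ : ∀ k, 0 < w k) (hw₁ : ∀ k, w k ≤ 1)
    (hr : 0 < r) (k : ℕ) :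
    log (w k) + k * log r - log k ! / p ≤ log (∑' j : ℕ, w j * r ^ j / (j ! : ℝ) ^ (1 / p)) := by
  have hw := hw₀ k
  calc _ = log (w k * r ^ k / (k ! : ℝ) ^ (1 / p)) := by
        rw [log_div (by positivity) (by positivity), log_mul hw.ne' (by positivity), log_pow,
          log_rpow (by positivity)]
        ring
    _ ≤ _ := log_le_log (by positivity)
        (weighted_term_le_tsum hp (fun j => (hw₀ j).le) hw₁ hr.le k)

lemma log_tsum_weighted_le (hp : 0 < p) (hw₀ : ∀ k, 0 < w k) (hw₁ : ∀ k, w k ≤ 1) (hr : 1 < r) :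
    log (∑' k : ℕ, w k * r ^ k / (k ! : ℝ) ^ (1 / p)) ≤ log r + (r / (1 - r⁻¹)) ^ p / p := by
  have hr₀ : 0 < r := one_pos.trans hr
  have hθ₀ : 0 < 1 - r⁻¹ := sub_pos.mpr (inv_lt_one_of_one_lt₀ hr)
  have hw := hw₀ 0
  have hpos : 0 < ∑' k : ℕ, w k * r ^ k / (k ! : ℝ) ^ (1 / p) :=
    (by positivity : 0 < w 0 * r ^ 0 / ((0 ! : ℕ) : ℝ) ^ (1 / p)).trans_le
      (weighted_term_le_tsum hp (fun j => (hw₀ j).le) hw₁ hr₀.le 0)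
  calc _ ≤ log (exp ((r / (1 - r⁻¹)) ^ p / p) / (1 - (1 - r⁻¹))) :=
        log_le_log hpos
          (tsum_weighted_le hp (fun j => (hw₀ j).le) hw₁ hr₀.le hθ₀ (by simpa using hr₀))
    _ = _ := by
        rw [sub_sub_cancel, div_inv_eq_mul, log_mul (exp_pos _).ne' hr₀.ne', log_exp, add_comm]

theorem tendsto_log_tsum_weighted_div (hp : 0 < p) (hw₀ : ∀ k, 0 < w k) (hw₁ : ∀ k, w k ≤ 1)
    (hw : Tendsto (fun k : ℕ => log (w k) / k) atTop (𝓝 0)) :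
    Tendsto (fun r => log (∑' k : ℕ, w k * r ^ k / (k ! : ℝ) ^ (1 / p)) / ((1 / p) * r ^ p))
      atTop (𝓝 1) := by
  have hlow : Tendsto (fun t : ℝ => p * (log (w ⌈t⌉₊) / t) + (⌈t⌉₊ * log t - log ⌈t⌉₊ !) / t)
      atTop (𝓝 1) := by
    simpa using ((tendsto_comp_ceil_div_of_tendsto_div hw).const_mul p).add
      tendsto_ceil_mul_log_sub_log_factorial_div
  have hup : Tendsto (fun r : ℝ => p * (log r / r ^ p) + (1 - r⁻¹)⁻¹ ^ p) atTop (𝓝 1) := by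
    have h₁ := (isLittleO_log_rpow_atTop hp).tendsto_div_nhds_zero
    have h₂ : Tendsto (fun r : ℝ => (1 - r⁻¹)⁻¹) atTop (𝓝 1) := by
      simpa using (tendsto_const_nhds.sub tendsto_inv_atTop_zero).inv₀
        (by norm_num : (1 : ℝ) - 0 ≠ 0)
    simpa using (h₁.const_mul p).add (h₂.rpow_const (Or.inl one_ne_zero))
  refine tendsto_of_tendsto_of_tendsto_of_le_of_le' (hlow.comp (tendsto_rpow_atTop hp)) hup ?_ ?_
  · filter_upwards [eventually_gt_atTop 0] with r hr
    have := rpow_pos_of_pos hr p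
    calc _ = (log (w ⌈r ^ p⌉₊) + ⌈r ^ p⌉₊ * log r - log ⌈r ^ p⌉₊ ! / p) / ((1 / p) * r ^ p) := by
          simp only [Function.comp_apply, log_rpow hr]
          field_simp
          ring
      _ ≤ _ := div_le_div_of_nonneg_right (log_weighted_term_le_log_tsum hp hw₀ hw₁ hr _)
          (by positivity)
  · filter_upwards [eventually_gt_atTop 1] with r hr
    have hr₀ : 0 < r := one_pos.trans hr
    have hθ₀ : 0 < 1 - r⁻¹ := sub_pos.mpr (inv_lt_one_of_one_lt₀ hr)
    have := rpow_pos_of_pos hr₀ p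
    have := rpow_pos_of_pos hθ₀ p
    calc _ ≤ (log r + (r / (1 - r⁻¹)) ^ p / p) / ((1 / p) * r ^ p) :=
          div_le_div_of_nonneg_right (log_tsum_weighted_le hp hw₀ hw₁ hr) (by positivity)
      _ = _ := by
          rw [div_rpow hr₀.le hθ₀.le, inv_rpow hθ₀.le]
          field_simp

end WeightedSeries

/-- the entire functions `Φ_p^{L,u}` and `Φ_{p,b}^{L,l}` and
their logarithmic asymptotics `∼ (1/p)·r^p`. -/
theorem stmt_17 (p b : ℝ) (hp : 0 < p) (hb : 0 < b) :
    (∀ z : ℂ, Summable (fun k : ℕ =>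
      ((1 / (k.factorial : ℝ) ^ ((1 : ℝ) / p) : ℝ) : ℂ) * z ^ k)) ∧
    (∀ z : ℂ, Summable (fun k : ℕ =>
      ((Real.exp (-b * Real.sqrt k) / (k.factorial : ℝ) ^ ((1 : ℝ) / p) : ℝ) : ℂ) * z ^ k)) ∧
    Filter.Tendsto (fun r : ℝ =>
        Real.log (∑' k : ℕ, r ^ k / (k.factorial : ℝ) ^ ((1 : ℝ) / p)) /
          ((1 / p) * r ^ p))
      Filter.atTop (nhds 1) ∧
    Filter.Tendsto (fun r : ℝ =>
        Real.log (∑' k : ℕ,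
            Real.exp (-b * Real.sqrt k) * r ^ k / (k.factorial : ℝ) ^ ((1 : ℝ) / p)) /
          ((1 / p) * r ^ p))
      Filter.atTop (nhds 1) := by
  set w : ℕ → ℝ := fun k => exp (-b * sqrt k)
  have hw₀ : ∀ k, 0 < w k := fun k => exp_pos _
  have hw₁ : ∀ k, w k ≤ 1 := fun k =>
    exp_le_one_iff.mpr (mul_nonpos_of_nonpos_of_nonneg (neg_nonpos.mpr hb.le) (sqrt_nonneg _))
  have hw : Tendsto (fun k : ℕ => log (w k) / k) atTop (𝓝 0) := by
    have := ((tendsto_inv_atTop_zero.comp tendsto_sqrt_atTop).comp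
      tendsto_natCast_atTop_atTop).const_mul (-b)
    rw [mul_zero] at this
    refine this.congr fun k => ?_
    simp only [Function.comp_apply, w, log_exp, neg_mul, neg_div, mul_div_assoc, sqrt_div_self',
      one_div]
  refine ⟨summable_ofReal_weighted_mul_pow (w := fun _ => 1) hp (fun _ => zero_le_one)
      (fun _ => le_rfl), summable_ofReal_weighted_mul_pow hp (fun k => (hw₀ k).le) hw₁, ?_,
    tendsto_log_tsum_weighted_div hp hw₀ hw₁ hw⟩
  simpa using tendsto_log_tsum_weighted_div (w := fun _ => 1) hp (fun _ => one_pos)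
    (fun _ => le_rfl) (by simp)

end
end
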